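/- arXiv:2008.09426 — 4 statements merged into one kernel-verified Lean document; each statement's English description precedes it below -/
import Mathlib

section
/- Let $\psi : [0,\infty) \to \mathbb{R}$ be absolutely continuous with $\psi(0) = 1$, satisfying a.e. $\dot\psi(t) = \gamma_0 (1-\psi(t))(1-u(t)) + \gamma_1 (K_\psi(t)\bar\psi - \psi(t)) u(t)$, where $u(t) \in \{0,1\}$, $\gamma_0, \gamma_1 \in [0,1]$, $\bar\psi \in (0,1)$, and $K_\psi : [0,\infty) \to \mathbb{R}$ is continuous with $\bar K_\psi \le K_\psi(t) \le 1$ for all $t$, for some constant $\bar K_\psi \in (0,1)$. Then $\psi(t) \in (\bar K_\psi \bar\psi, 1]$ for all $t \ge 0$. -/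
open Set MeasureTheory intervalIntegral Topology Filter

/-- First-crossing lemma: if `g` is continuous on `[0,b]`, nonpositive at `0` and positive
at `b`, there is a last zero `t0` of `g` before `b`, with `g > 0` on `(t0, b]`. -/
lemma crossing_aux {g : ℝ → ℝ} {b : ℝ} (hb : 0 ≤ b)
    (hg : ContinuousOn g (Icc 0 b)) (h0 : g 0 ≤ 0) (hbp : 0 < g b) :
    ∃ t0, t0 ∈ Ico 0 b ∧ g t0 = 0 ∧ ∀ s ∈ Ioc t0 b, 0 < g s := by
  set S : Set ℝ := {t ∈ Icc 0 b | g t ≤ 0} with hS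
  have hScl : IsClosed S := hg.preimage_isClosed_of_isClosed isClosed_Icc isClosed_Iic
  have hScomp : IsCompact S :=
    isCompact_Icc.of_isClosed_subset hScl (fun x hx => hx.1)
  have hSne : S.Nonempty := ⟨0, ⟨le_rfl, hb⟩, h0⟩
  set t0 := sSup S with ht0def
  have ht0S : t0 ∈ S := hScomp.sSup_mem hSne
  have ht0Icc : t0 ∈ Icc 0 b := ht0S.1
  have ht0b : t0 < b := by
    rcases lt_or_eq_of_le ht0Icc.2 with h | h
    · exact h
    · exfalso; have := ht0S.2; rw [h] at this; linarith
  have hpos : ∀ s ∈ Ioc t0 b, 0 < g s := by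
    intro s hs
    by_contra hle
    push_neg at hle
    have hsS : s ∈ S := ⟨⟨ht0Icc.1.trans hs.1.le, hs.2⟩, hle⟩
    have : s ≤ t0 := le_csSup hScomp.bddAbove hsS
    linarith [hs.1]
  have hne : (𝓝[Ioc t0 b] t0).NeBot := by
    rw [← mem_closure_iff_nhdsWithin_neBot, closure_Ioc ht0b.ne]
    exact ⟨le_rfl, ht0b.le⟩
  have htend : Filter.Tendsto g (𝓝[Ioc t0 b] t0) (nhds (g t0)) := by
    refine (hg t0 ht0Icc).mono_left (nhdsWithin_mono _ ?_)
    exact fun s hs => ⟨ht0Icc.1.trans hs.1.le, hs.2⟩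
  have hge : 0 ≤ g t0 :=
    ge_of_tendsto htend (Filter.eventually_of_mem self_mem_nhdsWithin
      (fun s hs => (hpos s hs).le))
  exact ⟨t0, ⟨ht0Icc.1, ht0b⟩, le_antisymm ht0S.2 hge, hpos⟩

/-- A priori bounds on the population response `ψ`: an absolutely continuous solution
(written in integral form) of `ψ' = γ₀(1-ψ)(1-u) + γ₁(Kψ·ψ̄ - ψ)u` with `ψ 0 = 1`,
binary input `u`, and `K̄ψ ≤ Kψ ≤ 1` stays in `(K̄ψ·ψ̄, 1]`. -/
theorem stmt_2
    (ψ u Kψ : ℝ → ℝ)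
    (γ0 γ1 ψbar Kbar : ℝ)
    (hγ0 : γ0 ∈ Icc (0:ℝ) 1) (hγ1 : γ1 ∈ Icc (0:ℝ) 1)
    (hψbar : ψbar ∈ Ioo (0:ℝ) 1) (hKbar : Kbar ∈ Ioo (0:ℝ) 1)
    (hu : ∀ t : ℝ, u t = 0 ∨ u t = 1)
    (hK : Continuous Kψ)
    (hKbounds : ∀ t : ℝ, 0 ≤ t → Kbar ≤ Kψ t ∧ Kψ t ≤ 1)
    (hψ0 : ψ 0 = 1)
    (hint : ∀ t : ℝ, 0 ≤ t → IntervalIntegrable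
      (fun s => γ0 * (1 - ψ s) * (1 - u s) + γ1 * (Kψ s * ψbar - ψ s) * u s)
      MeasureTheory.volume 0 t)
    (hψ : ∀ t : ℝ, 0 ≤ t →
      ψ t = 1 + ∫ s in (0:ℝ)..t,
        (γ0 * (1 - ψ s) * (1 - u s) + γ1 * (Kψ s * ψbar - ψ s) * u s)) :
    ∀ t : ℝ, 0 ≤ t → ψ t ∈ Ioc (Kbar * ψbar) 1 := by
  obtain ⟨hγ00, hγ01⟩ := hγ0
  obtain ⟨hγ10, hγ11⟩ := hγ1
  obtain ⟨hψb0, hψb1⟩ := hψbar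
  obtain ⟨hKb0, hKb1⟩ := hKbar
  set c : ℝ := Kbar * ψbar with hcdef
  have hc0 : 0 < c := mul_pos hKb0 hψb0
  have hc1 : c < 1 := by nlinarith
  set f : ℝ → ℝ := fun s => γ0 * (1 - ψ s) * (1 - u s) + γ1 * (Kψ s * ψbar - ψ s) * u s
    with hfdef
  -- integrability on subintervals
  have hInt : ∀ t0 t1 : ℝ, 0 ≤ t0 → t0 ≤ t1 → IntervalIntegrable f volume t0 t1 := by
    intro t0 t1 h0 h01
    refine (hint t1 (h0.trans h01)).mono_set ?_
    rw [uIcc_of_le h01, uIcc_of_le (h0.trans h01)]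
    exact Icc_subset_Icc h0 le_rfl
  -- continuity of ψ on [0, b]
  have hψcont : ∀ b : ℝ, 0 ≤ b → ContinuousOn ψ (Icc 0 b) := by
    intro b hb
    have h1 : ContinuousOn (fun t => 1 + ∫ s in (0:ℝ)..t, f s) (Icc 0 b) := by
      have h2 := intervalIntegral.continuousOn_primitive_interval' (hint b hb)
        left_mem_uIcc
      rw [uIcc_of_le hb] at h2
      exact continuousOn_const.add h2
    exact h1.congr fun t ht => hψ t ht.1
  -- difference formula
  have hdiff : ∀ t0 t1 : ℝ, 0 ≤ t0 → t0 ≤ t1 → ψ t1 - ψ t0 = ∫ s in t0..t1, f s := by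
    intro t0 t1 h0 h01
    have h1 : (0:ℝ) ≤ t1 := h0.trans h01
    rw [hψ t1 h1, hψ t0 h0,
      ← intervalIntegral.integral_add_adjacent_intervals (hint t0 h0) (hInt t0 t1 h0 h01)]
    ring
  -- pointwise sign facts
  have hfle : ∀ s : ℝ, 0 ≤ s → 1 ≤ ψ s → f s ≤ 0 := by
    intro s hs h1
    obtain ⟨hK1, hK2⟩ := hKbounds s hs
    rcases hu s with h | h <;> simp only [hfdef, h]
    · nlinarith [mul_nonneg hγ00 (by linarith : (0:ℝ) ≤ ψ s - 1)]
    · have h3 : Kψ s * ψbar ≤ ψbar := by nlinarith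
      nlinarith [mul_nonneg hγ10 (by linarith : (0:ℝ) ≤ ψ s - Kψ s * ψbar)]
  have hfge0 : ∀ s : ℝ, 0 ≤ s → ψ s ≤ c → 0 ≤ f s := by
    intro s hs h1
    obtain ⟨hK1, hK2⟩ := hKbounds s hs
    rcases hu s with h | h <;> simp only [hfdef, h]
    · nlinarith [mul_nonneg hγ00 (by linarith : (0:ℝ) ≤ 1 - ψ s)]
    · have h3 : c ≤ Kψ s * ψbar := by rw [hcdef]; nlinarith
      nlinarith [mul_nonneg hγ10 (by linarith : (0:ℝ) ≤ Kψ s * ψbar - ψ s)]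
  have hfge : ∀ s : ℝ, 0 ≤ s → c ≤ ψ s → ψ s ≤ 1 → c - ψ s ≤ f s := by
    intro s hs h1 h2
    obtain ⟨hK1, hK2⟩ := hKbounds s hs
    rcases hu s with h | h <;> simp only [hfdef, h]
    · nlinarith [mul_nonneg hγ00 (by linarith : (0:ℝ) ≤ 1 - ψ s)]
    · have hx : c ≤ Kψ s * ψbar := by rw [hcdef]; nlinarith
      rcases le_or_gt 0 (Kψ s * ψbar - ψ s) with hx0 | hx0
      · nlinarith [mul_nonneg hγ10 hx0]
      · nlinarith [mul_nonneg (by linarith : (0:ℝ) ≤ 1 - γ1)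
          (by linarith : (0:ℝ) ≤ ψ s - Kψ s * ψbar)]
  -- Step A : upper bound
  have hub : ∀ t : ℝ, 0 ≤ t → ψ t ≤ 1 := by
    intro t1 ht1
    by_contra hgt
    push_neg at hgt
    obtain ⟨t0, ht0, hg0, hpos⟩ := crossing_aux (g := fun t => ψ t - 1) ht1
      ((hψcont t1 ht1).sub continuousOn_const) (by simp [hψ0]) (by simp; linarith)
    have h1le : ∀ s ∈ Icc t0 t1, 1 ≤ ψ s := by
      intro s hs
      rcases eq_or_lt_of_le hs.1 with rfl | h
      · linarith [hg0]
      · linarith [hpos s ⟨h, hs.2⟩]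
    have hile : ∫ s in t0..t1, f s ≤ ∫ s in t0..t1, (0:ℝ) :=
      intervalIntegral.integral_mono_on ht0.2.le (hInt t0 t1 ht0.1 ht0.2.le)
        intervalIntegrable_const
        (fun s hs => hfle s (ht0.1.trans hs.1) (h1le s hs))
    have hd := hdiff t0 t1 ht0.1 ht0.2.le
    simp only [intervalIntegral.integral_zero] at hile
    have : ψ t0 - 1 = 0 := hg0
    linarith
  -- Step B : nonstrict lower bound
  have hlbw : ∀ t : ℝ, 0 ≤ t → c ≤ ψ t := by
    intro t1 ht1
    by_contra hgt
    push_neg at hgt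
    obtain ⟨t0, ht0, hg0, hpos⟩ := crossing_aux (g := fun t => c - ψ t) ht1
      (continuousOn_const.sub (hψcont t1 ht1)) (by simp [hψ0]; linarith) (by simp; linarith)
    have h1le : ∀ s ∈ Icc t0 t1, ψ s ≤ c := by
      intro s hs
      rcases eq_or_lt_of_le hs.1 with rfl | h
      · linarith [hg0]
      · linarith [hpos s ⟨h, hs.2⟩]
    have hile : ∫ s in t0..t1, (0:ℝ) ≤ ∫ s in t0..t1, f s :=
      intervalIntegral.integral_mono_on ht0.2.le intervalIntegrable_const
        (hInt t0 t1 ht0.1 ht0.2.le)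
        (fun s hs => hfge0 s (ht0.1.trans hs.1) (h1le s hs))
    have hd := hdiff t0 t1 ht0.1 ht0.2.le
    simp only [intervalIntegral.integral_zero] at hile
    have : c - ψ t0 = 0 := hg0
    linarith
  -- Step C : strict lower bound via an exponential barrier
  have hlb : ∀ t : ℝ, 0 ≤ t → (1 - c) * Real.exp (-t) ≤ ψ t - c := by
    intro t1 ht1
    by_contra hgt
    push_neg at hgt
    set φ : ℝ → ℝ := fun s => (1 - c) * Real.exp (-s) with hφdef
    have hφcont : Continuous φ := by
      exact continuous_const.mul (Real.continuous_exp.comp continuous_neg)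
    obtain ⟨t0, ht0, hg0, hpos⟩ := crossing_aux (g := fun t => φ t - (ψ t - c)) ht1
      (hφcont.continuousOn.sub ((hψcont t1 ht1).sub continuousOn_const))
      (by simp [hψ0, hφdef]) (by simp only [hφdef]; simp; linarith)
    have ht00 : (0:ℝ) ≤ t0 := ht0.1
    have ht01 : t0 < t1 := ht0.2
    have hsub : Icc t0 t1 ⊆ Icc 0 t1 := Icc_subset_Icc ht00 le_rfl
    have hψc' : ContinuousOn ψ (Icc t0 t1) := (hψcont t1 ht1).mono hsub
    -- lower bound for the integral of f
    have h2 : ∫ s in t0..t1, (c - ψ s) ≤ ∫ s in t0..t1, f s :=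
      intervalIntegral.integral_mono_on ht01.le
        ((continuousOn_const.sub hψc').intervalIntegrable_of_Icc ht01.le)
        (hInt t0 t1 ht00 ht01.le)
        (fun s hs => hfge s (ht00.trans hs.1) (hlbw s (ht00.trans hs.1))
          (hub s (ht00.trans hs.1)))
    -- strict comparison with the barrier
    have h3 : ∫ s in t0..t1, (ψ s - c) < ∫ s in t0..t1, φ s := by
      refine intervalIntegral.integral_lt_integral_of_continuousOn_of_le_of_exists_lt ht01
        (hψc'.sub continuousOn_const) (hφcont.continuousOn) ?_ ?_
      · intro s hs
        have := hpos s hs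
        linarith
      · exact ⟨t1, ⟨ht01.le, le_rfl⟩, by linarith [hpos t1 ⟨ht01, le_rfl⟩]⟩
    -- compute the integral of the barrier
    have h4 : ∫ s in t0..t1, φ s = (1 - c) * (Real.exp (-t0) - Real.exp (-t1)) := by
      have hderiv : ∀ x ∈ uIcc t0 t1,
          HasDerivAt (fun s => -((1 - c) * Real.exp (-s))) (φ x) x := by
        intro x _
        have h := (((Real.hasDerivAt_exp (-x)).comp x (hasDerivAt_neg x)).const_mul (1 - c)).neg
        exact (h : HasDerivAt (fun s => -((1 - c) * Real.exp (-s))) _ x).congr_deriv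
          (by simp [hφdef])
      rw [intervalIntegral.integral_eq_sub_of_hasDerivAt hderiv
        (hφcont.intervalIntegrable t0 t1)]
      ring
    have hneg : ∫ s in t0..t1, (c - ψ s) = -∫ s in t0..t1, (ψ s - c) := by
      rw [← intervalIntegral.integral_neg]
      congr 1
      funext s
      ring
    have hd := hdiff t0 t1 ht00 ht01.le
    have hg0' : φ t0 - (ψ t0 - c) = 0 := hg0
    have hp1 : 0 < φ t1 - (ψ t1 - c) := hpos t1 ⟨ht01, le_rfl⟩
    simp only [hφdef] at hg0' hp1
    linarith [h2, h3, h4, hd, hneg]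
  intro t ht
  have h1 := hlb t ht
  have h2 := Real.exp_pos (-t)
  exact ⟨by nlinarith, hub t ht⟩
end

section
/- Let $I_A, I_S : [0,\omega) \to \mathbb{R}$ be nonnegative, continuously differentiable, with $I_S > 0$ on $[0,\omega)$, satisfying $\dot I_A(t) = (1-p) w(t) - \alpha_A I_A(t)$ and $\dot I_S(t) = p\, w(t) - \tfrac{\alpha_S}{1-\rho} I_S(t)$ for some continuous nonnegative function $w$, where $p \in (0,1]$, $\rho \in [0,1)$, and $0 < \alpha_A \le \tfrac{\alpha_S}{1-\rho}$. If $I_A(0) \ge \tfrac{1-p}{p} I_S(0)$, then $I_A(t) \ge \tfrac{1-p}{p} I_S(t)$ for all $t \in [0,\omega)$. -/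
open Set
open scoped ENNReal

/-- Lemma A.1(ii): the ratio bound `I_A ≥ (1-p)/p · I_S` is preserved along solutions. -/
theorem stmt_3
    (ω : ℝ≥0∞) (hω : 0 < ω)
    (IA IS w : ℝ → ℝ)
    (p ρ αA αS : ℝ)
    (hp : p ∈ Ioc (0:ℝ) 1) (hρ : ρ ∈ Ico (0:ℝ) 1)
    (hαA : 0 < αA) (hαAS : αA ≤ αS / (1 - ρ))
    (hw : Continuous w) (hwpos : ∀ t : ℝ, 0 ≤ t → ENNReal.ofReal t < ω → 0 ≤ w t)
    (hIAnn : ∀ t : ℝ, 0 ≤ t → ENNReal.ofReal t < ω → 0 ≤ IA t)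
    (hISpos : ∀ t : ℝ, 0 ≤ t → ENNReal.ofReal t < ω → 0 < IS t)
    (hIA : ∀ t : ℝ, 0 ≤ t → ENNReal.ofReal t < ω →
      HasDerivAt IA ((1 - p) * w t - αA * IA t) t)
    (hIS : ∀ t : ℝ, 0 ≤ t → ENNReal.ofReal t < ω →
      HasDerivAt IS (p * w t - (αS / (1 - ρ)) * IS t) t)
    (h0 : IA 0 ≥ (1 - p) / p * IS 0) :
    ∀ t : ℝ, 0 ≤ t → ENNReal.ofReal t < ω → IA t ≥ (1 - p) / p * IS t := by
  intro t ht0 htω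
  set c : ℝ := (1 - p) / p with hc
  set κ : ℝ := αS / (1 - ρ) with hκ
  have hp0 : 0 < p := hp.1
  have hc0 : 0 ≤ c := div_nonneg (by linarith [hp.2]) hp0.le
  have hcp : c * p = 1 - p := by rw [hc]; field_simp [hp0.ne']
  set u : ℝ → ℝ := fun s => (IA s - c * IS s) * Real.exp (αA * s) with hu
  -- each point of [0,t] is in the domain
  have hmem : ∀ s ∈ Icc (0:ℝ) t, 0 ≤ s ∧ ENNReal.ofReal s < ω := by
    intro s hs
    exact ⟨hs.1, lt_of_le_of_lt (ENNReal.ofReal_le_ofReal hs.2) htω⟩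
  have hderiv : ∀ s ∈ Icc (0:ℝ) t, HasDerivAt u
      (((1 - p) * w s - αA * IA s - c * (p * w s - κ * IS s)) * Real.exp (αA * s)
        + (IA s - c * IS s) * (Real.exp (αA * s) * (αA * 1))) s := by
    intro s hs
    obtain ⟨hs0, hsω⟩ := hmem s hs
    have hz : HasDerivAt (fun s => IA s - c * IS s)
        ((1 - p) * w s - αA * IA s - c * (p * w s - κ * IS s)) s :=
      (hIA s hs0 hsω).sub ((hIS s hs0 hsω).const_mul c)
    have he : HasDerivAt (fun s => Real.exp (αA * s)) (Real.exp (αA * s) * (αA * 1)) s :=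
      ((hasDerivAt_id s).const_mul αA).exp
    exact hz.mul he
  have hderiv_nonneg : ∀ s ∈ Icc (0:ℝ) t,
      0 ≤ ((1 - p) * w s - αA * IA s - c * (p * w s - κ * IS s)) * Real.exp (αA * s)
        + (IA s - c * IS s) * (Real.exp (αA * s) * (αA * 1)) := by
    intro s hs
    obtain ⟨hs0, hsω⟩ := hmem s hs
    have key : ((1 - p) * w s - αA * IA s - c * (p * w s - κ * IS s)) * Real.exp (αA * s)
        + (IA s - c * IS s) * (Real.exp (αA * s) * (αA * 1))
        = (((1 - p) - c * p) * w s + c * (κ - αA) * IS s) * Real.exp (αA * s) := by ring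
    rw [key, hcp]
    have : 0 ≤ c * (κ - αA) * IS s :=
      mul_nonneg (mul_nonneg hc0 (by linarith)) (hISpos s hs0 hsω).le
    have h1 : (0:ℝ) ≤ (1 - p - (1 - p)) * w s + c * (κ - αA) * IS s := by
      simpa using this
    exact mul_nonneg h1 (Real.exp_pos _).le
  have hmono : MonotoneOn u (Icc 0 t) := by
    apply monotoneOn_of_deriv_nonneg (convex_Icc 0 t)
    · exact fun s hs => (hderiv s hs).continuousAt.continuousWithinAt
    · intro s hs
      rw [interior_Icc] at hs
      exact (hderiv s (Ioo_subset_Icc_self hs)).differentiableAt.differentiableWithinAt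
    · intro s hs
      rw [interior_Icc] at hs
      rw [(hderiv s (Ioo_subset_Icc_self hs)).deriv]
      exact hderiv_nonneg s (Ioo_subset_Icc_self hs)
  have h0t : u 0 ≤ u t := hmono ⟨le_refl 0, ht0⟩ ⟨ht0, le_refl t⟩ ht0
  have hu0 : 0 ≤ u 0 := by
    simp only [hu, mul_zero, Real.exp_zero, mul_one]
    linarith
  have hut : 0 ≤ (IA t - c * IS t) * Real.exp (αA * t) := le_trans hu0 h0t
  nlinarith [Real.exp_pos (αA * t), hut]
end

section
/- Let $z : [0,\omega) \to \mathbb{R}$ be absolutely continuous and suppose that for almost all $t$, $\dot z(t) = \big((-a z(t) + b + c(t)) z(t) + d\big) y(t)$, where $a, d > 0$, $b \in \mathbb{R}$, $y : [0,\omega) \to (0,\infty)$ is continuous, and $c : [0,\omega) \to \mathbb{R}$ is continuous. Fix $C > 0$ and suppose $c(t) \le \bar c$ for all $t$ and some constant $\bar c$. If $z(0) \ge 0$, then for all $t \in [0,\omega)$, $z(t) \le \max\{ z(0),\ d/C,\ (C + b + \bar c)/a \}$. -/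
open Set MeasureTheory intervalIntegral
open scoped ENNReal

/-- Riccati-type comparison lemma: an absolutely continuous solution (integral form) of
`ż = ((-a z + b + c) z + d) y` with `a, d > 0`, `y > 0`, `c ≤ c̄` and `z 0 ≥ 0` satisfies
`z t ≤ max {z 0, d / C, (C + b + c̄)/a}` for any `C > 0`. -/
theorem stmt_5
    (ω : ℝ≥0∞) (hω : 0 < ω)
    (z y c g : ℝ → ℝ)
    (a b d C cbar : ℝ)
    (ha : 0 < a) (hd : 0 < d) (hC : 0 < C)
    (hy : Continuous y) (hypos : ∀ t : ℝ, 0 ≤ t → ENNReal.ofReal t < ω → 0 < y t)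
    (hc : Continuous c)
    (hcbar : ∀ t : ℝ, 0 ≤ t → ENNReal.ofReal t < ω → c t ≤ cbar)
    (hgint : ∀ t : ℝ, 0 ≤ t → ENNReal.ofReal t < ω →
      IntervalIntegrable g MeasureTheory.volume 0 t)
    (hz : ∀ t : ℝ, 0 ≤ t → ENNReal.ofReal t < ω → z t = z 0 + ∫ s in (0:ℝ)..t, g s)
    (hode : ∀ᵐ t ∂(volume.restrict {t : ℝ | 0 ≤ t ∧ ENNReal.ofReal t < ω}),
      g t = ((-a * z t + b + c t) * z t + d) * y t)
    (hz0 : 0 ≤ z 0) :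
    ∀ t : ℝ, 0 ≤ t → ENNReal.ofReal t < ω →
      z t ≤ max (z 0) (max (d / C) ((C + b + cbar) / a)) := by
  intro t ht htω
  set M := max (z 0) (max (d / C) ((C + b + cbar) / a)) with hMdef
  by_contra hcon
  push_neg at hcon
  have hMd : d / C ≤ M := le_trans (le_max_left _ _) (le_max_right _ _)
  have hMa : (C + b + cbar) / a ≤ M := le_trans (le_max_right _ _) (le_max_right _ _)
  have hMz0 : z 0 ≤ M := le_max_left _ _
  have hdom : ∀ u : ℝ, u ∈ Icc (0:ℝ) t → (0 ≤ u ∧ ENNReal.ofReal u < ω) := by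
    intro u hu
    exact ⟨hu.1, lt_of_le_of_lt (ENNReal.ofReal_le_ofReal hu.2) htω⟩
  -- integrability on Icc 0 t
  have hIoc : IntegrableOn g (Ioc 0 t) volume := (hgint t ht htω).1
  have hIcc : IntegrableOn g (Icc 0 t) volume :=
    (integrableOn_Icc_iff_integrableOn_Ioc (by simp)).2 hIoc
  -- continuity of z on Icc 0 t
  have hcont0 : ContinuousOn (fun u => z 0 + ∫ s in (0:ℝ)..u, g s) (Icc 0 t) := by
    apply ContinuousOn.add continuousOn_const
    have h := intervalIntegral.continuousOn_primitive_interval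
      (μ := volume) (f := g) (b := t) (a := (0:ℝ)) (by simpa [uIcc_of_le ht] using hIcc)
    simpa [uIcc_of_le ht] using h
  have hcz : ContinuousOn z (Icc 0 t) :=
    hcont0.congr (fun u hu => hz u (hdom u hu).1 (hdom u hu).2)
  -- the set where z ≤ M
  set S := Icc (0:ℝ) t ∩ z ⁻¹' (Iic M) with hSdef
  have hSne : S.Nonempty := ⟨0, ⟨le_refl 0, ht⟩, hMz0⟩
  have hSbdd : BddAbove S := ⟨t, fun u hu => hu.1.2⟩
  have hSclosed : IsClosed S :=
    hcz.preimage_isClosed_of_isClosed isClosed_Icc isClosed_Iic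
  set s := sSup S with hsdef
  have hsS : s ∈ S := IsClosed.csSup_mem hSclosed hSne hSbdd
  have hs0 : 0 ≤ s := hsS.1.1
  have hst : s ≤ t := hsS.1.2
  have hzs : z s ≤ M := hsS.2
  have hsltt : s < t := by
    rcases lt_or_eq_of_le hst with h | h
    · exact h
    · exact absurd (h ▸ hzs) (not_le.2 hcon)
  have hzgt : ∀ u ∈ Ioc s t, M < z u := by
    intro u hu
    by_contra h
    push_neg at h
    have huS : u ∈ S := ⟨⟨le_trans hs0 hu.1.le, hu.2⟩, h⟩
    exact absurd (le_csSup hSbdd huS) (not_le.2 hu.1)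
  have hsω : ENNReal.ofReal s < ω := (hdom s ⟨hs0, hst⟩).2
  have hint_t := hgint t ht htω
  have hint_s := hgint s hs0 hsω
  have hzt : z t = z s + ∫ u in s..t, g u := by
    have h1 := hz t ht htω
    have h2 := hz s hs0 hsω
    have h3 := intervalIntegral.integral_interval_sub_left hint_t hint_s
    rw [h1, h2]
    linarith [h3]
  have hae : ∀ᵐ u ∂(volume.restrict (Ioc s t)), g u ≤ 0 := by
    have hsub : Ioc s t ⊆ {u : ℝ | 0 ≤ u ∧ ENNReal.ofReal u < ω} := by
      intro u hu
      exact ⟨le_trans hs0 hu.1.le,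
        lt_of_le_of_lt (ENNReal.ofReal_le_ofReal hu.2) htω⟩
    have h1 := ae_restrict_of_ae_restrict_of_subset hsub hode
    filter_upwards [h1, ae_restrict_mem measurableSet_Ioc] with u hgu hu
    have hzu := hzgt u hu
    have hyu : 0 < y u := hypos u (le_trans hs0 hu.1.le) (hsub hu).2
    have hcu : c u ≤ cbar := hcbar u (le_trans hs0 hu.1.le) (hsub hu).2
    have h3 : d / C ≤ z u := le_trans hMd hzu.le
    have h4 : (C + b + cbar) / a ≤ z u := le_trans hMa hzu.le
    have h5 : d ≤ C * z u := by rw [div_le_iff₀ hC] at h3; nlinarith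
    have h6 : C + b + cbar ≤ a * z u := by rw [div_le_iff₀ ha] at h4; nlinarith
    have h7 : 0 < z u := lt_of_lt_of_le (div_pos hd hC) h3
    rw [hgu]
    have hq : (-a * z u + b + c u) * z u + d ≤ 0 := by
      nlinarith [mul_le_mul_of_nonneg_right
        (show -a * z u + b + c u ≤ -C by linarith) h7.le]
    exact mul_nonpos_iff.2 (Or.inr ⟨hq, hyu.le⟩)
  have hI : (∫ u in s..t, g u) ≤ 0 := by
    rw [intervalIntegral.integral_of_le hsltt.le]
    exact integral_nonpos_of_ae hae
  linarith [hzt, hI, hzs, hcon]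
end

section
/- Let $p \in (0,1)$, $N > R^0 > 0$, $\zeta, z, M_1, M_2, \alpha_S > 0$, $\rho \in [0,1)$, and define $q_2(\varepsilon) = \tfrac{\alpha_S}{1-\rho} + M_1\varepsilon - M_2$ and $q_1(\varepsilon) = \big(pz(1 - \tfrac{R^0}{N} - \tfrac{2\varepsilon}{pN}) + p(\zeta+1)(2M_1\varepsilon - M_2)\big) q_2(\varepsilon) - pzM_1\varepsilon(1 - \tfrac{R^0}{N} - \tfrac{\varepsilon}{pN}) - pM_1(\zeta+1)\varepsilon(M_1\varepsilon - M_2)$. Suppose $q_1(M_2/M_1) > 0$ and $p(\zeta+1)M_1 - z/N > 0$, and $q_2 > 0$ on $[M_2/M_1, \varphi^+]$. Then $q_1$ is strictly increasing on $[M_2/M_1, \varphi^+]$ and the function $q(\varepsilon) = \big(pz\varepsilon(1 - \tfrac{R^0}{N} - \tfrac{\varepsilon}{pN}) + p(M_1\varepsilon - M_2)(\zeta+1)\varepsilon\big)/q_2(\varepsilon)$ is strictly increasing on $[M_2/M_1, \varphi^+]$. -/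
open Set

private lemma quad_hasDerivAt (c0 c1 c2 x : ℝ) :
    HasDerivAt (fun ε : ℝ => c0 + c1 * ε + c2 * ε ^ 2) (c1 + 2 * c2 * x) x := by
  have h1 : HasDerivAt (fun ε : ℝ => c0 + c1 * ε) c1 x := by
    simpa using ((hasDerivAt_id x).const_mul c1).const_add c0
  have h2 : HasDerivAt (fun ε : ℝ => c2 * ε ^ 2) (c2 * (2 * x)) x := by
    simpa using (hasDerivAt_pow 2 x).const_mul c2
  have := h1.add h2
  exact this.congr_deriv (by ring)

/-- Monotonicity step in the proof of Theorem 4 (robustness): `q₁` and `q` are strictly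
increasing on `[M₂/M₁, φ⁺]`. -/
theorem stmt_12
    (p N R0 ζ z M1 M2 αS ρ φp : ℝ)
    (hp : p ∈ Ioo (0:ℝ) 1) (hNR : R0 < N) (hR0 : 0 < R0)
    (hζ : 0 < ζ) (hz : 0 < z) (hM1 : 0 < M1) (hM2 : 0 < M2) (hαS : 0 < αS)
    (hρ : ρ ∈ Ico (0:ℝ) 1) (hφp : M2 / M1 < φp)
    (q2 q1 q : ℝ → ℝ)
    (hq2 : ∀ ε : ℝ, q2 ε = αS / (1 - ρ) + M1 * ε - M2)
    (hq1 : ∀ ε : ℝ, q1 ε =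
      (p * z * (1 - R0 / N - 2 * ε / (p * N)) + p * (ζ + 1) * (2 * M1 * ε - M2)) * q2 ε
        - p * z * M1 * ε * (1 - R0 / N - ε / (p * N))
        - p * M1 * (ζ + 1) * ε * (M1 * ε - M2))
    (hq : ∀ ε : ℝ, q ε =
      (p * z * ε * (1 - R0 / N - ε / (p * N)) + p * (M1 * ε - M2) * (ζ + 1) * ε) / q2 ε)
    (hq1pos : q1 (M2 / M1) > 0)
    (hslope : p * (ζ + 1) * M1 - z / N > 0)
    (hq2pos : ∀ ε ∈ Icc (M2 / M1) φp, 0 < q2 ε) :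
    StrictMonoOn q1 (Icc (M2 / M1) φp) ∧ StrictMonoOn q (Icc (M2 / M1) φp) := by
  have hp0 : (0:ℝ) < p := hp.1
  have hN : (0:ℝ) < N := lt_trans hR0 hNR
  have hpN : p * N ≠ 0 := by positivity
  have hpne : p ≠ 0 := ne_of_gt hp0
  have hNne : N ≠ 0 := ne_of_gt hN
  set s : ℝ := p * (ζ + 1) * M1 - z / N with hs_def
  set K : ℝ := αS / (1 - ρ) - M2 with hK_def
  -- quadratic form of q1
  have hq1form : ∀ ε : ℝ, q1 ε =
      (p * z * (1 - R0 / N) - p * (ζ + 1) * M2) * K + (2 * s * K) * ε + (M1 * s) * ε ^ 2 := by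
    intro ε
    rw [hq1, hq2, hs_def, hK_def]
    field_simp
    ring
  -- derivative of q1
  have hDq1 : ∀ x : ℝ, HasDerivAt q1 (2 * s * q2 x) x := by
    intro x
    have h := quad_hasDerivAt ((p * z * (1 - R0 / N) - p * (ζ + 1) * M2) * K)
      (2 * s * K) (M1 * s) x
    have hfun : q1 = fun ε : ℝ =>
        (p * z * (1 - R0 / N) - p * (ζ + 1) * M2) * K + (2 * s * K) * ε + (M1 * s) * ε ^ 2 :=
      funext hq1form
    rw [hfun]
    convert h using 1
    rw [hq2, hK_def]
    ring
  have hconvex : Convex ℝ (Icc (M2 / M1) φp) := convex_Icc _ _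
  have hint : interior (Icc (M2 / M1) φp) = Ioo (M2 / M1) φp := interior_Icc
  have hcont1 : Continuous q1 := by
    have hfun : q1 = fun ε : ℝ =>
        (p * z * (1 - R0 / N) - p * (ζ + 1) * M2) * K + (2 * s * K) * ε + (M1 * s) * ε ^ 2 :=
      funext hq1form
    rw [hfun]
    exact (continuous_const.add (continuous_const.mul continuous_id)).add
      (continuous_const.mul (continuous_pow 2))
  have hmono1 : StrictMonoOn q1 (Icc (M2 / M1) φp) := by
    apply strictMonoOn_of_deriv_pos hconvex hcont1.continuousOn
    intro x hx
    rw [hint] at hx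
    rw [(hDq1 x).deriv]
    have h2 : 0 < q2 x := hq2pos x ⟨le_of_lt hx.1, le_of_lt hx.2⟩
    have hs0 : 0 < s := hslope
    have : 0 < 2 * s := by linarith
    exact mul_pos this h2
  refine ⟨hmono1, ?_⟩
  -- q1 is positive on (M2/M1, φp]
  have hq1posOn : ∀ x ∈ Icc (M2 / M1) φp, M2 / M1 < x → 0 < q1 x := by
    intro x hx hlt
    have := hmono1 ⟨le_refl _, le_of_lt hφp⟩ hx hlt
    linarith
  -- numerator of q
  set num : ℝ → ℝ := fun ε =>
    p * z * ε * (1 - R0 / N - ε / (p * N)) + p * (M1 * ε - M2) * (ζ + 1) * ε with hnum_def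
  have hnumform : ∀ ε : ℝ, num ε =
      0 + (p * z * (1 - R0 / N) - p * (ζ + 1) * M2) * ε + s * ε ^ 2 := by
    intro ε
    rw [hnum_def, hs_def]
    field_simp
    ring
  have hDnum : ∀ x : ℝ, HasDerivAt num
      ((p * z * (1 - R0 / N) - p * (ζ + 1) * M2) + 2 * s * x) x := by
    intro x
    have h := quad_hasDerivAt 0 (p * z * (1 - R0 / N) - p * (ζ + 1) * M2) s x
    have hfun : num = fun ε : ℝ =>
        0 + (p * z * (1 - R0 / N) - p * (ζ + 1) * M2) * ε + s * ε ^ 2 := funext hnumform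
    rw [hfun]; exact h
  have hDq2 : ∀ x : ℝ, HasDerivAt q2 M1 x := by
    intro x
    have hfun : q2 = fun ε : ℝ => (αS / (1 - ρ) - M2) + M1 * ε := by
      funext ε; rw [hq2]; ring
    rw [hfun]
    simpa using ((hasDerivAt_id x).const_mul M1).const_add (αS / (1 - ρ) - M2)
  have hqfun : q = fun ε => num ε / q2 ε := by
    funext ε; rw [hq, hnum_def]
  have hcontnum : Continuous num := by
    have hfun : num = fun ε : ℝ =>
        0 + (p * z * (1 - R0 / N) - p * (ζ + 1) * M2) * ε + s * ε ^ 2 := funext hnumform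
    rw [hfun]
    exact (continuous_const.add (continuous_const.mul continuous_id)).add
      (continuous_const.mul (continuous_pow 2))
  have hcontq2 : Continuous q2 := by
    have hfun : q2 = fun ε : ℝ => (αS / (1 - ρ) - M2) + M1 * ε := by
      funext ε; rw [hq2]; ring
    rw [hfun]
    exact continuous_const.add (continuous_const.mul continuous_id)
  have hcontq : ContinuousOn q (Icc (M2 / M1) φp) := by
    rw [hqfun]
    exact ContinuousOn.div hcontnum.continuousOn hcontq2.continuousOn
      (fun x hx => ne_of_gt (hq2pos x hx))
  apply strictMonoOn_of_deriv_pos hconvex hcontq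
  intro x hx
  rw [hint] at hx
  have hxIcc : x ∈ Icc (M2 / M1) φp := ⟨le_of_lt hx.1, le_of_lt hx.2⟩
  have h2 : 0 < q2 x := hq2pos x hxIcc
  have h2ne : q2 x ≠ 0 := ne_of_gt h2
  have hD : HasDerivAt q
      ((((p * z * (1 - R0 / N) - p * (ζ + 1) * M2) + 2 * s * x) * q2 x - num x * M1)
        / (q2 x) ^ 2) x := by
    rw [hqfun]
    exact (hDnum x).div (hDq2 x) h2ne
  rw [hD.deriv]
  have hkey : ((p * z * (1 - R0 / N) - p * (ζ + 1) * M2) + 2 * s * x) * q2 x - num x * M1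
      = q1 x := by
    rw [hq1, hq2, hnum_def, hs_def]
    field_simp
    ring
  rw [hkey]
  have hq1x : 0 < q1 x := hq1posOn x hxIcc hx.1
  exact div_pos hq1x (pow_pos h2 2)
end
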